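/- As an identity of formal power series: (q;q)∞/(−q;q)∞ = 1 + 2·∑_{n=1}^{∞} (−1)ⁿ q^{n²}. -/

import Mathlib

/-!
Splitting the factors of `(q;q)∞` by parity gives `(q;q)∞ = (q;q²)∞ (q²;q²)∞`, and
`(1 + qᵏ)(1 - qᵏ) = 1 - q²ᵏ` gives `(-q;q)∞ (q;q)∞ = (q²;q²)∞`. Hence `1/(-q;q)∞ = (q;q²)∞`,
and the claim becomes `(q;q²)∞² (q²;q²)∞ = ∑ₙ (-1)ⁿ q^{n²}`, the triple product identity at
`z = -1`.

Its finite form `(q;q²)ₙ² = ∑_{a+b=2n} (-1)^{a+n} q^{(a-n)²} [a+b, a]_{q²}` is the q-binomial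
theorem `∏_{i<2n} (s + q^{2i} t) = ∑_{a+b=2n} q^{a(a-1)} [a+b, a]_{q²} tᵃ sᵇ` at `s = q^{2n+1}`,
`t = -q²`, divided by `(-1)ⁿ q^{n(3n+2)}`. Modulo `q^N` with `n ≥ 2N`, a term survives only if
`(a-n)² < N`, so that `a, b ≥ N`; then `[a+b, a]_{q²} (q²;q²)_a (q²;q²)_b = (q²;q²)_{a+b}` shows
`[a+b, a]_{q²} ≡ 1/(q²;q²)∞`.
-/

open PowerSeries Finset

/-- The power series `∏_{k=0}^∞ g k`, defined coefficientwise via stabilized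
finite partial products (valid when `g k ≡ 1` modulo degree `> k`). -/
noncomputable def iProd (g : ℕ → PowerSeries ℤ) : PowerSeries ℤ :=
  PowerSeries.mk fun n => PowerSeries.coeff (R := ℤ) n (∏ k ∈ Finset.range (n + 1), g k)

/-- `(q^j; q^j)_∞ = ∏_{k≥1} (1 - q^{jk})` as a formal power series. -/
noncomputable def F (j : ℕ) : PowerSeries ℤ :=
  iProd fun k => 1 - (PowerSeries.X : PowerSeries ℤ) ^ (j * (k + 1))

/-- `(-q; q)_∞ = ∏_{k≥1} (1 + q^k)` as a formal power series. -/
noncomputable def Fneg : PowerSeries ℤ :=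
  iProd fun k => 1 + (PowerSeries.X : PowerSeries ℤ) ^ (k + 1)

/-- Multiplicative inverse of a power series with constant coefficient `1`. -/
noncomputable def psInv (f : PowerSeries ℤ) : PowerSeries ℤ := PowerSeries.invOfUnit f 1

section Truncation

variable {R : Type*} [CommRing R]

noncomputable def modXPow (N : ℕ) : R⟦X⟧ →+* R⟦X⟧ ⧸ Ideal.span {(X : R⟦X⟧) ^ N} :=
  Ideal.Quotient.mk _

theorem modXPow_eq_modXPow_iff {N : ℕ} {f g : R⟦X⟧} :
    modXPow N f = modXPow N g ↔ ∀ n < N, coeff n f = coeff n g := by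
  simp only [modXPow, Ideal.Quotient.eq, Ideal.mem_span_singleton, X_pow_dvd_iff, map_sub,
    sub_eq_zero]

theorem eq_of_forall_modXPow_eq {f g : R⟦X⟧} (h : ∀ N, modXPow N f = modXPow N g) : f = g :=
  ext fun n ↦ modXPow_eq_modXPow_iff.mp (h (n + 1)) n n.lt_succ_self

theorem modXPow_eq_of_le {M N : ℕ} {f g : R⟦X⟧} (hMN : M ≤ N)
    (h : modXPow N f = modXPow N g) : modXPow M f = modXPow M g :=
  modXPow_eq_modXPow_iff.mpr fun n hn ↦ modXPow_eq_modXPow_iff.mp h n (hn.trans_le hMN)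

theorem modXPow_X_pow {N e : ℕ} (h : N ≤ e) : modXPow N (X ^ e : R⟦X⟧) = 0 :=
  Ideal.Quotient.eq_zero_iff_mem.mpr (Ideal.mem_span_singleton.mpr (pow_dvd_pow X h))

theorem modXPow_one_sub_X_pow {N e : ℕ} (h : N ≤ e) : modXPow N (1 - X ^ e : R⟦X⟧) = 1 := by
  rw [map_sub, modXPow_X_pow h, map_one, sub_zero]

theorem modXPow_one_add_X_pow {N e : ℕ} (h : N ≤ e) : modXPow N (1 + X ^ e : R⟦X⟧) = 1 := by
  rw [map_add, modXPow_X_pow h, map_one, add_zero]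

end Truncation

section InfiniteProduct

variable {f g : ℕ → ℤ⟦X⟧}

theorem modXPow_prod_range {N m : ℕ} (hg : ∀ k, modXPow (k + 1) (g k) = 1) (h : N ≤ m) :
    modXPow N (∏ k ∈ range m, g k) = modXPow N (∏ k ∈ range N, g k) := by
  have htail : modXPow N (∏ k ∈ Ico N m, g k) = 1 := by
    rw [map_prod]
    exact prod_eq_one fun k hk ↦ by simpa using modXPow_eq_of_le (by simp at hk; omega) (hg k)
  rw [← prod_range_mul_prod_Ico g h, map_mul, htail, mul_one]

theorem modXPow_iProd {N m : ℕ} (hg : ∀ k, modXPow (k + 1) (g k) = 1) (h : N ≤ m) :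
    modXPow N (iProd g) = modXPow N (∏ k ∈ range m, g k) := by
  refine modXPow_eq_modXPow_iff.mpr fun n hn ↦ ?_
  rw [iProd, coeff_mk]
  refine modXPow_eq_modXPow_iff.mp ?_ n n.lt_succ_self
  rw [modXPow_prod_range hg (by omega : n + 1 ≤ m), modXPow_prod_range hg le_rfl]

theorem constantCoeff_iProd (hg : ∀ k, modXPow (k + 1) (g k) = 1) :
    constantCoeff (iProd g) = 1 := by
  have h : modXPow 1 (iProd g) = modXPow 1 1 := by
    rw [modXPow_iProd hg le_rfl, prod_range_one, hg 0, map_one]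
  simpa using modXPow_eq_modXPow_iff.mp h 0 one_pos

theorem iProd_mul_iProd (hf : ∀ k, modXPow (k + 1) (f k) = 1)
    (hg : ∀ k, modXPow (k + 1) (g k) = 1) :
    iProd f * iProd g = iProd fun k ↦ f k * g k := by
  refine eq_of_forall_modXPow_eq fun N ↦ ?_
  rw [map_mul, modXPow_iProd hf le_rfl, modXPow_iProd hg le_rfl,
    modXPow_iProd (fun k ↦ by rw [map_mul, hf, hg, one_mul]) le_rfl, ← map_mul, prod_mul_distrib]

theorem iProd_eq_iProd_mul_pairs (hg : ∀ k, modXPow (k + 1) (g k) = 1) :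
    iProd g = iProd fun k ↦ g (2 * k) * g (2 * k + 1) := by
  have hpair : ∀ m, ∏ k ∈ range (2 * m), g k = ∏ k ∈ range m, g (2 * k) * g (2 * k + 1) := by
    intro m
    induction m with
    | zero => simp
    | succ m ih =>
      rw [mul_add_one, prod_range_succ, prod_range_succ, prod_range_succ, ih, mul_assoc]
  refine eq_of_forall_modXPow_eq fun N ↦ ?_
  have hg' : ∀ k, modXPow (k + 1) (g (2 * k) * g (2 * k + 1)) = 1 := fun k ↦ by
    rw [map_mul, modXPow_eq_of_le (by omega) (hg (2 * k)),
      modXPow_eq_of_le (by omega) (hg (2 * k + 1)), map_one, one_mul]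
  rw [modXPow_iProd hg (by omega : N ≤ 2 * N), hpair, modXPow_iProd hg' le_rfl]

end InfiniteProduct

-- `(q; q²)_∞`
noncomputable def Fodd : ℤ⟦X⟧ :=
  iProd fun k ↦ 1 - X ^ (2 * k + 1)

theorem Fodd_mul_F_two : Fodd * F 2 = F 1 := by
  rw [Fodd, F, F, iProd_mul_iProd (fun _ ↦ modXPow_one_sub_X_pow (by omega))
    (fun _ ↦ modXPow_one_sub_X_pow (by omega)),
    iProd_eq_iProd_mul_pairs (fun _ ↦ modXPow_one_sub_X_pow (by omega))]
  ring_nf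

theorem Fneg_mul_F_one : Fneg * F 1 = F 2 := by
  rw [Fneg, F, F, iProd_mul_iProd (fun _ ↦ modXPow_one_add_X_pow le_rfl)
    (fun _ ↦ modXPow_one_sub_X_pow (by omega))]
  ring_nf

theorem isUnit_F_two : IsUnit (F 2) := by
  rw [isUnit_iff_constantCoeff, F, constantCoeff_iProd (fun _ ↦ modXPow_one_sub_X_pow (by omega))]
  exact isUnit_one

theorem Fneg_mul_Fodd : Fneg * Fodd = 1 :=
  (mul_eq_right₀ isUnit_F_two.ne_zero).mp (by rw [mul_assoc, Fodd_mul_F_two, Fneg_mul_F_one])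

theorem psInv_Fneg : psInv Fneg = Fodd :=
  left_inv_eq_right_inv (invOfUnit_mul _ _ (by
    rw [Fneg, constantCoeff_iProd (fun _ ↦ modXPow_one_add_X_pow le_rfl)]; rfl)) Fneg_mul_Fodd

section GaussianBinomial

variable {R : Type*} [CommRing R]

-- `gaussBinom q a b` is the Gaussian binomial coefficient `[a + b, a]_q`.
def gaussBinom (q : R) : ℕ → ℕ → R
  | 0, _ => 1
  | _ + 1, 0 => 1
  | a + 1, b + 1 => gaussBinom q a (b + 1) + q ^ (a + 1) * gaussBinom q (a + 1) b

-- `(q; q)_n`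
def qPochhammer (q : R) (n : ℕ) : R :=
  ∏ i ∈ range n, (1 - q ^ (i + 1))

theorem qPochhammer_succ (q : R) (n : ℕ) :
    qPochhammer q (n + 1) = qPochhammer q n * (1 - q ^ (n + 1)) :=
  prod_range_succ _ n

theorem gaussBinom_mul_qPochhammer_mul_qPochhammer (q : R) (a b : ℕ) :
    gaussBinom q a b * qPochhammer q a * qPochhammer q b = qPochhammer q (a + b) := by
  induction a, b using gaussBinom.induct with
  | case1 b => simp [gaussBinom, qPochhammer]
  | case2 a => simp [gaussBinom, qPochhammer]
  | case3 a b ih₁ ih₂ =>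
    rw [show a + (b + 1) = a + b + 1 by ring, qPochhammer_succ q b] at ih₁
    rw [show a + 1 + b = a + b + 1 by ring, qPochhammer_succ q a] at ih₂
    rw [gaussBinom, show a + 1 + (b + 1) = a + b + 1 + 1 by ring, qPochhammer_succ q (a + b + 1),
      qPochhammer_succ q a, qPochhammer_succ q b]
    linear_combination (1 - q ^ (a + 1)) * ih₁ + q ^ (a + 1) * (1 - q ^ (b + 1)) * ih₂

theorem sum_antidiagonal_succ_gaussBinom_mul (q : R) (m : ℕ) (f : ℕ × ℕ → R) :
    ∑ p ∈ antidiagonal (m + 1), gaussBinom q p.1 p.2 * f p =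
      ∑ p ∈ antidiagonal m,
        gaussBinom q p.1 p.2 * (f (p.1 + 1, p.2) + q ^ p.1 * f (p.1, p.2 + 1)) := by
  simp only [mul_add, sum_add_distrib]
  cases m with
  | zero => simp [Nat.sum_antidiagonal_succ, gaussBinom, add_comm]
  | succ m =>
    rw [Nat.sum_antidiagonal_succ' (f := fun p ↦ gaussBinom q p.1 p.2 * f (p.1 + 1, p.2)),
      Nat.sum_antidiagonal_succ (f := fun p ↦ gaussBinom q p.1 p.2 * (q ^ p.1 * f (p.1, p.2 + 1))),
      Nat.antidiagonal_succ_succ', sum_cons, sum_cons, sum_map]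
    simp only [Function.Embedding.coe_prodMap, Function.Embedding.coeFn_mk, Prod.map,
      Nat.succ_eq_add_one, gaussBinom, add_mul, sum_add_distrib]
    ring_nf

theorem prod_range_add_pow_mul (q s t : R) (m : ℕ) :
    ∏ i ∈ range m, (s + q ^ i * t) =
      ∑ p ∈ antidiagonal m, gaussBinom q p.1 p.2 * (q ^ p.1.choose 2 * t ^ p.1 * s ^ p.2) := by
  induction m generalizing t with
  | zero => simp [gaussBinom]
  | succ m ih =>
    have hfactor : ∀ i, s + q ^ (i + 1) * t = s + q ^ i * (q * t) := fun i ↦ by ring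
    rw [prod_range_succ', sum_antidiagonal_succ_gaussBinom_mul]
    simp only [hfactor, ih, sum_mul]
    refine sum_congr rfl fun p _ ↦ ?_
    rw [Nat.choose_succ_succ', Nat.choose_one_right]
    ring

theorem prod_range_two_mul_pow_sub_pow (x : R) (n : ℕ) :
    ∏ i ∈ range (2 * n), (x ^ (2 * n + 1) - x ^ (2 * i + 2)) =
      (-1) ^ n * x ^ (n * (3 * n + 2)) * (∏ i ∈ range n, (1 - x ^ (2 * i + 1))) ^ 2 := by
  have hsum : ∑ i ∈ range n, (2 * i + 2) = n * (n + 1) := by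
    induction n with
    | zero => rfl
    | succ n ih => rw [sum_range_succ, ih]; ring
  have hlow : ∏ i ∈ range n, (x ^ (2 * n + 1) - x ^ (2 * i + 2)) =
      (-1) ^ n * x ^ (n * (n + 1)) * ∏ i ∈ range n, (1 - x ^ (2 * i + 1)) := by
    rw [← prod_range_reflect (fun i ↦ 1 - x ^ (2 * i + 1)), ← hsum, ← prod_pow_eq_pow_sum,
      pow_eq_prod_const (-1 : R) n, ← prod_mul_distrib, ← prod_mul_distrib]
    refine prod_congr rfl fun i hi ↦ ?_
    rw [show 2 * n + 1 = 2 * i + 2 + (2 * (n - 1 - i) + 1) by simp at hi; omega, pow_add]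
    ring
  have hhigh : ∏ i ∈ range n, (x ^ (2 * n + 1) - x ^ (2 * (n + i) + 2)) =
      x ^ (n * (2 * n + 1)) * ∏ i ∈ range n, (1 - x ^ (2 * i + 1)) := by
    rw [mul_comm n, pow_mul, pow_eq_prod_const (x ^ (2 * n + 1)) n, ← prod_mul_distrib]
    exact prod_congr rfl fun i _ ↦ by ring
  rw [two_mul, prod_range_add, ← two_mul, hlow, hhigh]
  ring

theorem sq_pow_choose_two_mul_neg_sq_pow_mul_pow (x : R) {n a b : ℕ} (hab : a + b = 2 * n) :
    (x ^ 2) ^ a.choose 2 * (-x ^ 2) ^ a * (x ^ (2 * n + 1)) ^ b =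
      (-1) ^ n * x ^ (n * (3 * n + 2)) * ((-1) ^ (a + n) * x ^ ((a - n : ℤ).natAbs ^ 2)) := by
  have hchoose (c : ℕ) : 2 * c.choose 2 + c = c ^ 2 := by
    induction c with
    | zero => rfl
    | succ c ih => rw [Nat.choose_succ_succ', Nat.choose_one_right]; linarith [ih]
  have hexp : 2 * a.choose 2 + 2 * a + (2 * n + 1) * b =
      n * (3 * n + 2) + (a - n : ℤ).natAbs ^ 2 := by
    have ha := hchoose a
    zify at ha hab ⊢
    rw [sq_abs]
    linear_combination ha + (2 * (n : ℤ) + 1) * hab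
  have hsign : (-1 : R) ^ n * (-1) ^ (a + n) = (-1) ^ a := by
    rw [← pow_add, show n + (a + n) = a + 2 * n by ring, pow_add, pow_mul, neg_one_sq, one_pow,
      mul_one]
  calc (x ^ 2) ^ a.choose 2 * (-x ^ 2) ^ a * (x ^ (2 * n + 1)) ^ b
      = (-1) ^ a * x ^ (2 * a.choose 2 + 2 * a + (2 * n + 1) * b) := by
        rw [neg_pow, ← pow_mul, ← pow_mul, ← pow_mul, pow_add, pow_add]; ring
    _ = _ := by rw [hexp, pow_add, ← hsign]; ring

theorem sq_prod_range_one_sub_pow_eq_sum_gaussBinom [IsDomain R] {x : R} (hx : x ≠ 0) (n : ℕ) :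
    (∏ i ∈ range n, (1 - x ^ (2 * i + 1))) ^ 2 =
      ∑ p ∈ antidiagonal (2 * n),
        gaussBinom (x ^ 2) p.1 p.2 * ((-1) ^ (p.1 + n) * x ^ ((p.1 - n : ℤ).natAbs ^ 2)) := by
  have hcauchy := prod_range_add_pow_mul (x ^ 2) (x ^ (2 * n + 1)) (-x ^ 2) (2 * n)
  have hfactor : ∀ i ∈ range (2 * n),
      x ^ (2 * n + 1) + (x ^ 2) ^ i * -x ^ 2 = x ^ (2 * n + 1) - x ^ (2 * i + 2) :=
    fun i _ ↦ by ring
  rw [prod_congr rfl hfactor, prod_range_two_mul_pow_sub_pow,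
    sum_congr rfl fun p hp ↦ by
      rw [sq_pow_choose_two_mul_neg_sq_pow_mul_pow x (HasAntidiagonal.mem_antidiagonal.mp hp)],
    ← sum_congr rfl fun p _ ↦ mul_left_comm _ _ _,
    ← mul_sum] at hcauchy
  exact mul_left_cancel₀ (mul_ne_zero (pow_ne_zero _ (neg_ne_zero.mpr one_ne_zero))
    (pow_ne_zero _ hx)) hcauchy

theorem sum_antidiagonal_two_mul_neg_one_pow_mul_pow (x : R) (n : ℕ) :
    ∑ p ∈ antidiagonal (2 * n), (-1) ^ (p.1 + n) * x ^ ((p.1 - n : ℤ).natAbs ^ 2) =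
      1 + 2 * ∑ d ∈ Icc 1 n, (-1) ^ d * x ^ (d ^ 2) := by
  induction n with
  | zero => simp
  | succ n ih =>
    have hinner (a : ℕ) :
        (-1 : R) ^ (a + 1 + (n + 1)) * x ^ (((a + 1 : ℕ) - (n + 1 : ℕ) : ℤ).natAbs ^ 2) =
          (-1) ^ (a + n) * x ^ ((a - n : ℤ).natAbs ^ 2) := by
      rw [show a + 1 + (n + 1) = a + n + 2 by ring, pow_add, neg_one_sq, mul_one]
      push_cast
      ring_nf
    have hleft : ((0 : ℕ) - (n + 1 : ℕ) : ℤ).natAbs = n + 1 := by omega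
    have hright : ((2 * n + 1 + 1 : ℕ) - (n + 1 : ℕ) : ℤ).natAbs = n + 1 := by omega
    rw [show 2 * (n + 1) = 2 * n + 1 + 1 by ring, Nat.sum_antidiagonal_succ,
      Nat.sum_antidiagonal_succ', sum_Icc_succ_top (by omega)]
    simp only [hinner, hleft, hright, ih]
    rw [show 2 * n + 1 + 1 + (n + 1) = n + 1 + 2 * (n + 1) by ring, pow_add (-1 : R) (n + 1),
      pow_mul, neg_one_sq, one_pow, mul_one]
    ring

end GaussianBinomial

theorem modXPow_qPochhammer_X_sq {N m : ℕ} (h : N ≤ m) :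
    modXPow N (qPochhammer (X ^ 2 : ℤ⟦X⟧) m) = modXPow N (F 2) := by
  rw [F, modXPow_iProd (fun _ ↦ modXPow_one_sub_X_pow (by omega)) h, qPochhammer]
  simp only [← pow_mul]

theorem modXPow_gaussBinom_X_sq_mul_F_two {N a b : ℕ} (ha : N ≤ a) (hb : N ≤ b) :
    modXPow N (gaussBinom (X ^ 2 : ℤ⟦X⟧) a b * F 2) = 1 := by
  have h := congrArg (modXPow N) (gaussBinom_mul_qPochhammer_mul_qPochhammer (X ^ 2 : ℤ⟦X⟧) a b)
  rw [map_mul, map_mul, modXPow_qPochhammer_X_sq ha, modXPow_qPochhammer_X_sq hb,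
    modXPow_qPochhammer_X_sq (by omega : N ≤ a + b)] at h
  rw [map_mul]
  exact (isUnit_F_two.map (modXPow N)).mul_left_inj.mp (by rw [h, one_mul])

theorem modXPow_gaussBinom_X_sq_mul_mul_F_two {N n a b : ℕ} (hab : a + b = 2 * n)
    (hn : 2 * N ≤ n) (w : ℤ⟦X⟧) :
    modXPow N (gaussBinom (X ^ 2 : ℤ⟦X⟧) a b * (w * X ^ ((a - n : ℤ).natAbs ^ 2)) * F 2) =
      modXPow N (w * X ^ ((a - n : ℤ).natAbs ^ 2)) := by
  rcases le_or_gt N ((a - n : ℤ).natAbs ^ 2) with h | h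
  · simp only [map_mul, modXPow_X_pow h, mul_zero, zero_mul]
  · have hd : (a - n : ℤ).natAbs < N := (Nat.le_self_pow two_ne_zero _).trans_lt h
    rw [mul_right_comm, map_mul, modXPow_gaussBinom_X_sq_mul_F_two (by omega) (by omega), one_mul]

theorem modXPow_one_add_two_mul_sum_Icc {N n : ℕ} (h : N ≤ n + 1) :
    modXPow N (1 + 2 * ∑ d ∈ Icc 1 n, (-1) ^ d * X ^ (d ^ 2) : ℤ⟦X⟧) =
      modXPow N (1 + 2 * mk fun m ↦ ∑ d ∈ Icc 1 m, if d ^ 2 = m then (-1 : ℤ) ^ d else 0) := by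
  rw [map_add, map_add, map_mul, map_mul]
  congr 2
  refine modXPow_eq_modXPow_iff.mpr fun m hm ↦ ?_
  have hcoeff (d : ℕ) : coeff m ((-1 : ℤ⟦X⟧) ^ d * X ^ (d ^ 2)) =
      if d ^ 2 = m then (-1) ^ d else 0 := by
    rw [show (-1 : ℤ⟦X⟧) ^ d = C ((-1 : ℤ) ^ d) by simp, coeff_C_mul_X_pow]
    exact if_congr eq_comm rfl rfl
  rw [coeff_mk, map_sum]
  simp only [hcoeff]
  refine (sum_subset (Icc_subset_Icc_right (by omega)) fun d hd hdm ↦ ?_).symm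
  have : m < d ^ 2 := by
    simp only [mem_Icc] at hd hdm
    have := Nat.le_self_pow two_ne_zero d
    omega
  rw [if_neg this.ne']

theorem Fodd_sq_mul_F_two :
    Fodd ^ 2 * F 2 = 1 + 2 * mk fun m ↦ ∑ d ∈ Icc 1 m, if d ^ 2 = m then (-1 : ℤ) ^ d else 0 := by
  refine eq_of_forall_modXPow_eq fun N ↦ ?_
  have hFodd : modXPow N Fodd = modXPow N (∏ i ∈ range (2 * N), (1 - X ^ (2 * i + 1))) :=
    modXPow_iProd (fun _ ↦ modXPow_one_sub_X_pow (by omega)) (by omega)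
  calc modXPow N (Fodd ^ 2 * F 2)
      = modXPow N ((∏ i ∈ range (2 * N), (1 - X ^ (2 * i + 1))) ^ 2 * F 2) := by
        rw [map_mul, map_pow, hFodd, ← map_pow, ← map_mul]
    _ = ∑ p ∈ antidiagonal (2 * (2 * N)), modXPow N (gaussBinom (X ^ 2) p.1 p.2 *
          ((-1) ^ (p.1 + 2 * N) * X ^ ((p.1 - (2 * N : ℕ) : ℤ).natAbs ^ 2)) * F 2) := by
        rw [sq_prod_range_one_sub_pow_eq_sum_gaussBinom X_ne_zero, sum_mul, map_sum]
    _ = modXPow N (∑ p ∈ antidiagonal (2 * (2 * N)),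
          (-1) ^ (p.1 + 2 * N) * X ^ ((p.1 - (2 * N : ℕ) : ℤ).natAbs ^ 2)) := by
        rw [map_sum]
        exact sum_congr rfl fun p hp ↦ modXPow_gaussBinom_X_sq_mul_mul_F_two
          (HasAntidiagonal.mem_antidiagonal.mp hp) le_rfl _
    _ = _ := by
        rw [sum_antidiagonal_two_mul_neg_one_pow_mul_pow,
          modXPow_one_add_two_mul_sum_Icc (by omega)]

/-- Gauss: `(q;q)∞/(−q;q)∞ = 1 + 2∑_{n≥1} (−1)ⁿ q^{n²}`. -/
theorem gauss_theta_identity :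
    F 1 * psInv Fneg =
      1 + 2 * PowerSeries.mk (fun N =>
        ∑ n ∈ Finset.Icc 1 N, if n ^ 2 = N then ((-1 : ℤ)) ^ n else 0) := by
  rw [psInv_Fneg, ← Fodd_mul_F_two, ← Fodd_sq_mul_F_two]
  ring
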